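/- For the instance m = 3 with receivers ∅, {1}, {1,2}, {1,3}: for every k ≥ 2, the optimal very-pliable rate equals the optimal pliable rate equals 2, i.e., α_k = β_k = 2. In particular, the encoder E(x) = (x 2, x 3) with k² codewords achieves this and satisfies all four receivers' decoding requirements. -/
import Mathlib

/-- The receivers of the instance: side-information sets ∅, {1}, {1,2}, {1,3}
(messages indexed by `Fin 3`, so these are ∅, {0}, {0,1}, {0,2}). -/
def U3 : Set (Finset (Fin 3)) := {∅, {0}, {0, 1}, {0, 2}}

/-- Very-pliable index code for the instance `(3, U3)` over alphabet `Fin k`. -/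
def IsVPCode (k t : ℕ) (E : (Fin 3 → Fin k) → Fin t) : Prop :=
  ∀ H ∈ U3, ∀ (c : Fin t) (x' : Fin 3 → Fin k),
    ∃ i ∉ H, ∃ v : Fin k, ∀ x, E x = c → (∀ h ∈ H, x h = x' h) → x i = v

/-- Pliable index code for the instance `(3, U3)`: fixed decoding index per receiver. -/
def IsPliableCode (k t : ℕ) (E : (Fin 3 → Fin k) → Fin t) : Prop :=
  ∀ H ∈ U3, ∃ i ∉ H, ∀ x y : Fin 3 → Fin k,
    E x = E y → (∀ h ∈ H, x h = y h) → x i = y i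

lemma pliable_vp {k t : ℕ} {E : (Fin 3 → Fin k) → Fin t} (h : IsPliableCode k t E) :
    IsVPCode k t E := by
  intro H hH c x'
  obtain ⟨i, hi, hdec⟩ := h H hH
  refine ⟨i, hi, ?_⟩
  by_cases hex : ∃ x, E x = c ∧ ∀ h ∈ H, x h = x' h
  · obtain ⟨x₀, hx₀, hside⟩ := hex
    refine ⟨x₀ i, fun x hx hxs => ?_⟩
    exact hdec x x₀ (hx.trans hx₀.symm) (fun h hh => (hxs h hh).trans (hside h hh).symm)
  · exact ⟨x' 0, fun x hx hxs => absurd ⟨x, hx, hxs⟩ hex⟩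

lemma vp_inj {k t : ℕ} {E : (Fin 3 → Fin k) → Fin t} (hE : IsVPCode k t E) :
    Function.Injective (fun x : Fin 3 → Fin k => (E x, x 0)) := by
  intro x y hxy
  simp only [Prod.mk.injEq] at hxy
  obtain ⟨hc, h0⟩ := hxy
  obtain ⟨i, hi, v, hv⟩ := hE {0} (by simp [U3]) (E x) x
  have hxv : x i = v := hv x rfl (fun h hh => rfl)
  have hyv : y i = v := by
    refine hv y hc.symm ?_
    intro h hh
    simp only [Finset.mem_singleton] at hh
    subst hh; exact h0.symm
  have hi' : i = 1 ∨ i = 2 :=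
    (by decide : ∀ j : Fin 3, j ∉ ({0} : Finset (Fin 3)) → j = 1 ∨ j = 2) i hi
  have key12 : x 1 = y 1 → x 2 = y 2 := by
    intro h1
    obtain ⟨j, hj, w, hw⟩ := hE {0, 1} (by simp [U3]) (E x) x
    have hj2 : j = 2 :=
      (by decide : ∀ j : Fin 3, j ∉ ({0, 1} : Finset (Fin 3)) → j = 2) j hj
    subst hj2
    have h1' : x 2 = w := hw x rfl (fun h hh => rfl)
    have h2' : y 2 = w := by
      refine hw y hc.symm ?_
      intro h hh
      fin_cases hh
      · exact h0.symm
      · exact h1.symm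
    exact h1'.trans h2'.symm
  have key21 : x 2 = y 2 → x 1 = y 1 := by
    intro h2
    obtain ⟨j, hj, w, hw⟩ := hE {0, 2} (by simp [U3]) (E x) x
    have hj1 : j = 1 :=
      (by decide : ∀ j : Fin 3, j ∉ ({0, 2} : Finset (Fin 3)) → j = 1) j hj
    subst hj1
    have h1' : x 1 = w := hw x rfl (fun h hh => rfl)
    have h2' : y 1 = w := by
      refine hw y hc.symm ?_
      intro h hh
      fin_cases hh
      · exact h0.symm
      · exact h2.symm
    exact h1'.trans h2'.symm
  have h12 : x 1 = y 1 ∧ x 2 = y 2 := by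
    rcases hi' with h | h
    · subst h; have := hxv.trans hyv.symm
      exact ⟨this, key12 this⟩
    · subst h; have := hxv.trans hyv.symm
      exact ⟨key21 this, this⟩
  funext j
  fin_cases j
  · exact h0
  · exact h12.1
  · exact h12.2

lemma vp_card {k t : ℕ} (hk : 2 ≤ k) {E : (Fin 3 → Fin k) → Fin t} (hE : IsVPCode k t E) :
    k * k ≤ t := by
  have h := Fintype.card_le_of_injective _ (vp_inj hE)
  simp [Fintype.card_fun] at h
  have hk0 : 0 < k := by omega
  nlinarith [pow_succ k 2, pow_succ k 1, pow_zero k]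


/-- Optimal very-pliable rate `α_k`. -/
noncomputable def alphaRate (k : ℕ) : ℝ :=
  sInf {r : ℝ | ∃ (t : ℕ) (E : (Fin 3 → Fin k) → Fin t),
    IsVPCode k t E ∧ r = Real.log (t : ℝ) / Real.log (k : ℝ)}

/-- Optimal pliable rate `β_k`. -/
noncomputable def betaRate (k : ℕ) : ℝ :=
  sInf {r : ℝ | ∃ (t : ℕ) (E : (Fin 3 → Fin k) → Fin t),
    IsPliableCode k t E ∧ r = Real.log (t : ℝ) / Real.log (k : ℝ)}

lemma code_pliable (k : ℕ) :
    IsPliableCode k (k * k) (fun x => finProdFinEquiv (x 1, x 2)) := by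
  have hinj : ∀ x y : Fin 3 → Fin k,
      (finProdFinEquiv (x 1, x 2) : Fin (k * k)) = finProdFinEquiv (y 1, y 2) →
      x 1 = y 1 ∧ x 2 = y 2 := by
    intro x y h
    have := finProdFinEquiv.injective h
    exact ⟨congrArg Prod.fst this, congrArg Prod.snd this⟩
  intro H hH
  simp only [U3, Set.mem_insert_iff, Set.mem_singleton_iff] at hH
  rcases hH with rfl | rfl | rfl | rfl
  · exact ⟨1, by decide, fun x y h _ => (hinj x y h).1⟩
  · exact ⟨1, by decide, fun x y h _ => (hinj x y h).1⟩
  · exact ⟨2, by decide, fun x y h _ => (hinj x y h).2⟩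
  · exact ⟨1, by decide, fun x y h _ => (hinj x y h).1⟩

lemma log_rate_eq (k : ℕ) (hk : 2 ≤ k) :
    Real.log ((k * k : ℕ) : ℝ) / Real.log (k : ℝ) = 2 := by
  have hk1 : (1 : ℝ) < (k : ℝ) := by exact_mod_cast hk.trans_lt' one_lt_two
  have hlog : Real.log (k : ℝ) ≠ 0 := ne_of_gt (Real.log_pos hk1)
  push_cast
  rw [Real.log_mul (by positivity) (by positivity)]
  field_simp
  ring

lemma log_rate_ge (k t : ℕ) (hk : 2 ≤ k) (ht : k * k ≤ t) :
    (2 : ℝ) ≤ Real.log (t : ℝ) / Real.log (k : ℝ) := by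
  have hk1 : (1 : ℝ) < (k : ℝ) := by exact_mod_cast hk.trans_lt' one_lt_two
  have hlog : 0 < Real.log (k : ℝ) := Real.log_pos hk1
  rw [le_div_iff₀ hlog]
  have : (2 : ℝ) * Real.log (k : ℝ) = Real.log ((k : ℝ) * (k : ℝ)) := by
    rw [Real.log_mul (by positivity) (by positivity)]; ring
  rw [this]
  apply Real.log_le_log (by positivity)
  exact_mod_cast ht

theorem stmt_15 (k : ℕ) (hk : 2 ≤ k) :
    alphaRate k = 2 ∧ betaRate k = 2 ∧
    IsPliableCode k (k * k) (fun x => finProdFinEquiv (x 1, x 2)) := by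
  unfold alphaRate betaRate
  have hpl := code_pliable k
  have hvp := pliable_vp hpl
  have h2a : (2 : ℝ) ∈ {r : ℝ | ∃ (t : ℕ) (E : (Fin 3 → Fin k) → Fin t),
      IsVPCode k t E ∧ r = Real.log (t : ℝ) / Real.log (k : ℝ)} :=
    ⟨k * k, _, hvp, (log_rate_eq k hk).symm⟩
  have h2b : (2 : ℝ) ∈ {r : ℝ | ∃ (t : ℕ) (E : (Fin 3 → Fin k) → Fin t),
      IsPliableCode k t E ∧ r = Real.log (t : ℝ) / Real.log (k : ℝ)} :=
    ⟨k * k, _, hpl, (log_rate_eq k hk).symm⟩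
  have hlba : ∀ r ∈ {r : ℝ | ∃ (t : ℕ) (E : (Fin 3 → Fin k) → Fin t),
      IsVPCode k t E ∧ r = Real.log (t : ℝ) / Real.log (k : ℝ)}, (2 : ℝ) ≤ r := by
    rintro r ⟨t, E, hE, rfl⟩
    exact log_rate_ge k t hk (vp_card hk hE)
  have hlbb : ∀ r ∈ {r : ℝ | ∃ (t : ℕ) (E : (Fin 3 → Fin k) → Fin t),
      IsPliableCode k t E ∧ r = Real.log (t : ℝ) / Real.log (k : ℝ)}, (2 : ℝ) ≤ r := by
    rintro r ⟨t, E, hE, rfl⟩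
    exact log_rate_ge k t hk (vp_card hk (pliable_vp hE))
  refine ⟨le_antisymm (csInf_le ⟨2, hlba⟩ h2a) (le_csInf ⟨2, h2a⟩ hlba),
          le_antisymm (csInf_le ⟨2, hlbb⟩ h2b) (le_csInf ⟨2, h2b⟩ hlbb), hpl⟩
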